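/- For every symmetric polynomial f in r variables over ℂ, the evaluation f(L_1, ..., L_r) at the Jucys-Murphy elements lies in the center of the group algebra ℂ[S_r]. -/

import Mathlib

/-- The Jucys-Murphy element `L_k = ∑_{j<k} (j,k)` of the group algebra `ℂ[S_r]`. -/
noncomputable def JM (r : ℕ) (k : Fin r) : MonoidAlgebra ℂ (Equiv.Perm (Fin r)) :=
  ∑ j ∈ Finset.univ.filter (fun j => j < k),
    MonoidAlgebra.of ℂ (Equiv.Perm (Fin r)) (Equiv.swap j k)

/-- Evaluation of a polynomial in `r` variables at the Jucys-Murphy elements, monomial by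
monomial, with the factors of each monomial multiplied in the order `L_1, L_2, …, L_r`
(the `L_j` pairwise commute, so this is the natural evaluation). -/
noncomputable def evalJM (r : ℕ) (f : MvPolynomial (Fin r) ℂ) :
    MonoidAlgebra ℂ (Equiv.Perm (Fin r)) :=
  ∑ m ∈ f.support, f.coeff m • (List.ofFn fun j : Fin r => JM r j ^ m j).prod


/-!
Write `s = (i, i+1)` and `τ` for the transposition of the variables `x_i, x_{i+1}`. The
Jucys–Murphy elements commute pairwise and satisfy `s L_i - L_{i+1} s = -1`,
`s L_{i+1} - L_i s = 1` and `s L_k = L_k s` for `k ≠ i, i+1`. These relations propagate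
multiplicatively to `s f(L) - (τ f)(L) s = (∂ f)(L)`, where `∂ f = (f - τ f) / (x_{i+1} - x_i)` is
the divided difference. For symmetric `f` we have `τ f = f`, so `∂ f = 0` and `f(L)` commutes with
every adjacent transposition, hence with all of `S_r`.
-/

open Equiv MonoidAlgebra MvPolynomial

section TwistedDifference

variable {R P A : Type*} [CommRing R] [CommRing P] [Algebra R P] [Ring A] [Algebra R A]
  (φ : P →ₐ[R] A) (θ : P →ₐ[R] P) (δ : P) (s : A)

def twistedDifferenceSubalgebra : Subalgebra R P where
  carrier := {f | ∃ g, f - θ f = δ * g ∧ s * φ f - φ (θ f) * s = φ g}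
  -- Both `f ↦ s φ(f) - φ(θ f) s` and `f ↦ (f - θ f) / δ` are `θ`-twisted derivations.
  mul_mem' := by
    rintro f₁ f₂ ⟨g₁, hf₁, hs₁⟩ ⟨g₂, hf₂, hs₂⟩
    refine ⟨g₁ * f₂ + θ f₁ * g₂, ?_, ?_⟩
    · rw [map_mul]
      linear_combination f₂ * hf₁ + θ f₁ * hf₂
    · simp only [map_mul, map_add, ← hs₁, ← hs₂]
      noncomm_ring
  add_mem' := by
    rintro f₁ f₂ ⟨g₁, hf₁, hs₁⟩ ⟨g₂, hf₂, hs₂⟩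
    refine ⟨g₁ + g₂, ?_, ?_⟩
    · rw [map_add]
      linear_combination hf₁ + hf₂
    · simp only [map_add, ← hs₁, ← hs₂]
      noncomm_ring
  algebraMap_mem' c := ⟨0, by simp, by simp [Algebra.commutes]⟩

variable {φ θ δ s}

theorem commute_of_mem_twistedDifferenceSubalgebra [NoZeroDivisors P] (hδ : δ ≠ 0) {f : P}
    (hf : f ∈ twistedDifferenceSubalgebra φ θ δ s) (hθ : θ f = f) : Commute s (φ f) := by
  obtain ⟨g, hfg, hsg⟩ := hf
  rw [hθ, sub_self, zero_eq_mul] at hfg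
  rw [hθ, hfg.resolve_left hδ, map_zero, sub_eq_zero] at hsg
  exact hsg

theorem twistedDifferenceSubalgebra_eq_top {σ : Type*} {φ : MvPolynomial σ R →ₐ[R] A}
    {θ : MvPolynomial σ R →ₐ[R] MvPolynomial σ R} {δ : MvPolynomial σ R}
    (hX : ∀ i, X i ∈ twistedDifferenceSubalgebra φ θ δ s) :
    twistedDifferenceSubalgebra φ θ δ s = ⊤ := by
  rw [eq_top_iff, ← adjoin_range_X, Algebra.adjoin_le_iff]
  rintro _ ⟨i, rfl⟩
  exact hX i

end TwistedDifference

section CommutingEvaluation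

variable {σ R A : Type*} [CommSemiring R] [Semiring A] [Algebra R A]

theorem Algebra.isMulCommutative_adjoin_range {x : σ → A} (hx : ∀ i j, Commute (x i) (x j)) :
    IsMulCommutative (adjoin R (Set.range x)) :=
  isMulCommutative_adjoin R <| by
    rintro _ ⟨i, rfl⟩ _ ⟨j, rfl⟩
    exact hx i j

open scoped IsMulCommutative in
noncomputable def MvPolynomial.aevalOfCommute (x : σ → A) (hx : ∀ i j, Commute (x i) (x j)) :
    MvPolynomial σ R →ₐ[R] A :=
  have := Algebra.isMulCommutative_adjoin_range (R := R) hx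
  (Algebra.adjoin R (Set.range x)).val.comp (aeval fun i => ⟨x i, Algebra.subset_adjoin ⟨i, rfl⟩⟩)

@[simp]
theorem MvPolynomial.aevalOfCommute_X (x : σ → A) (hx : ∀ i j, Commute (x i) (x j)) (i : σ) :
    aevalOfCommute (R := R) x hx (X i) = x i := by
  simp [aevalOfCommute]

open scoped IsMulCommutative in
theorem MvPolynomial.aevalOfCommute_monomial {n : ℕ} (x : Fin n → A)
    (hx : ∀ i j, Commute (x i) (x j)) (m : Fin n →₀ ℕ) (c : R) :
    aevalOfCommute x hx (monomial m c) = c • (List.ofFn fun j => x j ^ m j).prod := by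
  have := Algebra.isMulCommutative_adjoin_range (R := R) hx
  rw [aevalOfCommute, AlgHom.comp_apply, aeval_monomial, Finsupp.prod_pow, ← List.prod_ofFn,
    map_mul, AlgHom.commutes, map_list_prod, List.map_ofFn, Algebra.smul_def]
  rfl

end CommutingEvaluation

theorem MonoidAlgebra.of_mul_of_swap {k α : Type*} [Semiring k] [DecidableEq α] (σ : Perm α)
    (x y : α) : of k _ σ * of k _ (swap x y) = of k _ (swap (σ x) (σ y)) * of k _ σ := by
  rw [← map_mul, ← map_mul, swap_apply_apply, inv_mul_cancel_right]

theorem MonoidAlgebra.of_swap_mul_self {k α : Type*} [Semiring k] [DecidableEq α] (x y : α) :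
    of k (Perm α) (swap x y) * of k _ (swap x y) = 1 := by
  rw [← map_mul, swap_mul_self, map_one]

theorem MonoidAlgebra.mem_center_of_closure_eq_top {k G : Type*} [CommSemiring k] [Monoid G]
    {S : Set G} (hS : Submonoid.closure S = ⊤) {x : MonoidAlgebra k G}
    (hx : ∀ g ∈ S, Commute (of k G g) x) : x ∈ Subalgebra.center k (MonoidAlgebra k G) := by
  have hG (g : G) : Commute (of k G g) x := by
    induction (hS ▸ Submonoid.mem_top g : g ∈ Submonoid.closure S) using
      Submonoid.closure_induction with
    | mem g hg => exact hx g hg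
    | one => simp
    | mul g h _ _ hg hh => simpa only [map_mul] using hg.mul_left hh
  rw [Subalgebra.mem_center_iff]
  intro b
  induction b using MonoidAlgebra.induction_on with
  | of g => exact hG g
  | add p q hp hq => rw [add_mul, mul_add, hp, hq]
  | smul c p hp => rw [smul_mul_assoc, mul_smul_comm, hp]

section JucysMurphy

variable {r : ℕ}

theorem of_mul_JM {σ : Perm (Fin r)} {k : Fin r} (hk : σ k = k) (hσ : ∀ x, σ x < k ↔ x < k) :
    of ℂ _ σ * JM r k = JM r k * of ℂ _ σ := by
  simp only [JM, Finset.mul_sum, Finset.sum_mul, of_mul_of_swap, hk]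
  exact Finset.sum_equiv σ (by simp [hσ]) (fun _ _ => rfl)

theorem JM_commute (j k : Fin r) : Commute (JM r j) (JM r k) := by
  wlog hjk : j < k generalizing j k
  · rcases (not_lt.mp hjk).eq_or_lt with rfl | hkj
    · rfl
    · exact (this k j hkj).symm
  refine Commute.sum_left _ _ _ fun a ha => ?_
  simp only [Finset.mem_filter, Finset.mem_univ, true_and] at ha
  refine of_mul_JM (swap_apply_of_ne_of_ne (ha.trans hjk).ne' hjk.ne') fun x => ?_
  rcases eq_or_ne x a with rfl | hxa
  · simp [ha.trans hjk, hjk]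
  rcases eq_or_ne x j with rfl | hxj
  · simp [ha.trans hjk, hjk]
  · rw [swap_apply_of_ne_of_ne hxa hxj]

theorem evalJM_eq_aevalOfCommute (f : MvPolynomial (Fin r) ℂ) :
    evalJM r f = aevalOfCommute (JM r) JM_commute f := by
  conv_rhs => rw [f.as_sum, map_sum]
  simp only [evalJM, aevalOfCommute_monomial]

variable {n : ℕ} (i : Fin n)

theorem JM_succ :
    JM (n + 1) i.succ = of ℂ _ (swap i.castSucc i.succ) +
      ∑ j ∈ Finset.univ.filter (· < i.castSucc), of ℂ _ (swap j i.succ) := by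
  have : Finset.univ.filter (· < i.succ) =
      insert i.castSucc (Finset.univ.filter (· < i.castSucc)) := by
    ext j
    simp [Fin.lt_def, Fin.ext_iff]
    omega
  rw [JM, this, Finset.sum_insert (by simp)]

theorem of_swap_mul_of_swap_of_lt {j : Fin (n + 1)} (hj : j < i.castSucc) :
    of ℂ _ (swap i.castSucc i.succ) * of ℂ _ (swap j i.castSucc) =
      of ℂ _ (swap j i.succ) * of ℂ _ (swap i.castSucc i.succ) ∧
    of ℂ _ (swap i.castSucc i.succ) * of ℂ _ (swap j i.succ) =
      of ℂ _ (swap j i.castSucc) * of ℂ _ (swap i.castSucc i.succ) := by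
  have hj' : j ≠ i.succ := (hj.trans i.castSucc_lt_succ).ne
  simp only [of_mul_of_swap (swap i.castSucc i.succ), swap_apply_left, swap_apply_right,
    swap_apply_of_ne_of_ne hj.ne hj', and_self]

theorem of_swap_mul_JM_castSucc :
    of ℂ _ (swap i.castSucc i.succ) * JM (n + 1) i.castSucc =
      JM (n + 1) i.succ * of ℂ _ (swap i.castSucc i.succ) - 1 := by
  rw [JM_succ, add_mul, of_swap_mul_self, add_sub_cancel_left, JM, Finset.mul_sum, Finset.sum_mul]
  refine Finset.sum_congr rfl fun j hj => (of_swap_mul_of_swap_of_lt i ?_).1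
  simpa using hj

theorem of_swap_mul_JM_succ :
    of ℂ _ (swap i.castSucc i.succ) * JM (n + 1) i.succ =
      JM (n + 1) i.castSucc * of ℂ _ (swap i.castSucc i.succ) + 1 := by
  rw [JM_succ, mul_add, of_swap_mul_self, add_comm (1 : MonoidAlgebra _ _), JM, Finset.mul_sum,
    Finset.sum_mul]
  congr 1
  refine Finset.sum_congr rfl fun j hj => (of_swap_mul_of_swap_of_lt i ?_).2
  simpa using hj

theorem of_swap_mul_JM_of_ne {k : Fin (n + 1)} (hk₁ : k ≠ i.castSucc) (hk₂ : k ≠ i.succ) :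
    of ℂ _ (swap i.castSucc i.succ) * JM (n + 1) k =
      JM (n + 1) k * of ℂ _ (swap i.castSucc i.succ) := by
  refine of_mul_JM (swap_apply_of_ne_of_ne hk₁ hk₂) fun x => ?_
  rcases eq_or_ne x i.castSucc with rfl | hx₁
  · simp [Fin.lt_def, Fin.ext_iff] at hk₁ hk₂ ⊢; omega
  rcases eq_or_ne x i.succ with rfl | hx₂
  · simp [Fin.lt_def, Fin.ext_iff] at hk₁ hk₂ ⊢; omega
  · rw [swap_apply_of_ne_of_ne hx₁ hx₂]

theorem twistedDifferenceSubalgebra_JM_eq_top :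
    twistedDifferenceSubalgebra (aevalOfCommute (R := ℂ) (JM (n + 1)) JM_commute)
      (rename (swap i.castSucc i.succ)) (X i.succ - X i.castSucc)
      (of ℂ _ (swap i.castSucc i.succ)) = ⊤ := by
  refine twistedDifferenceSubalgebra_eq_top fun k => ?_
  rcases eq_or_ne k i.castSucc with rfl | hk₁
  · refine ⟨(-1 : MvPolynomial _ ℂ), by simp, ?_⟩
    simp only [rename_X, swap_apply_left, aevalOfCommute_X, of_swap_mul_JM_castSucc, map_neg,
      map_one, sub_sub_cancel_left]
  rcases eq_or_ne k i.succ with rfl | hk₂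
  · refine ⟨1, by simp, ?_⟩
    simp only [rename_X, swap_apply_right, aevalOfCommute_X, of_swap_mul_JM_succ, map_one,
      add_sub_cancel_left]
  · refine ⟨0, by simp [swap_apply_of_ne_of_ne hk₁ hk₂], ?_⟩
    simp only [rename_X, swap_apply_of_ne_of_ne hk₁ hk₂, aevalOfCommute_X,
      of_swap_mul_JM_of_ne i hk₁ hk₂, sub_self, map_zero]

theorem of_swap_commute_evalJM_of_isSymmetric {f : MvPolynomial (Fin (n + 1)) ℂ} (hf : f.IsSymmetric) :
    Commute (of ℂ _ (swap i.castSucc i.succ)) (evalJM (n + 1) f) := by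
  rw [evalJM_eq_aevalOfCommute]
  refine commute_of_mem_twistedDifferenceSubalgebra ?_
    (twistedDifferenceSubalgebra_JM_eq_top i ▸ Algebra.mem_top) (hf _)
  rw [sub_ne_zero, Ne, X_inj]
  exact i.castSucc_lt_succ.ne'

end JucysMurphy

/-- For every symmetric polynomial `f` in `r` variables over `ℂ`, the evaluation
`f(L_1, …, L_r)` at the Jucys-Murphy elements lies in the center of `ℂ[S_r]`. -/
theorem symmetric_jucysMurphy_mem_center (r : ℕ) (f : MvPolynomial (Fin r) ℂ)
    (hf : f.IsSymmetric) :
    evalJM r f ∈ Subalgebra.center ℂ (MonoidAlgebra ℂ (Equiv.Perm (Fin r))) := by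
  rcases r with _ | n
  · exact mem_center_of_closure_eq_top (S := ∅) (Subsingleton.elim _ _) (by simp)
  refine mem_center_of_closure_eq_top (Perm.mclosure_swap_castSucc_succ n) ?_
  rintro _ ⟨i, rfl⟩
  exact of_swap_commute_evalJM_of_isSymmetric i hf
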